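/- Symmetric matrix elements are preserved by the gauging procedure: if O is a symmetric operator on H_m, ψ₀ ∈ H_m satisfies X(s)ψ₀ = ψ₀ for all s ∈ S, and ψ₁ ∈ H_m is arbitrary, then ⟨G ψ₀, 𝒢[O] (G ψ₁)⟩ = (|S|² / 2^{|I|}) · ⟨ψ₀, O ψ₁⟩, where |I| is the cardinality of I and |S| the cardinality of S. -/

import Mathlib

/-!
Each `C^s` acts as `X(s) ⊗ X_g(∂s)`, so `P = 2^{-|I|} Σ_u C^u` is absorbed by every `C^s`.
Since the `C^s` are self-adjoint, each of the `2^{|I|}` terms of `𝒢[O]` contributes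
`⟨ψ₀', O ψ₁'⟩`, where `ψ' = (1 ⊗ ⟨f_0|) G ψ`. Only the `C^u` with `∂u = 0` leave the gauge
register in `f_0`, so `ψ' = 2^{-|I|} Σ_{u ∈ S} X(u) ψ`, and the symmetry of `O` and `ψ₀` turns
each of the two sums over `S` into a factor `|S|`.
-/

set_option linter.unusedSectionVars false

noncomputable section

namespace GaugingFractal

/-- The sign `(-1)^t` attached to a `ZMod 2` exponent. -/
def sgn (t : ZMod 2) : ℂ := (-1 : ℂ) ^ t.val

lemma sgn_mul_self (t : ZMod 2) : sgn t * sgn t = 1 := by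
  unfold sgn
  rw [← pow_add, ← two_mul, pow_mul]
  norm_num

lemma zmodfun_add_self {K : Type*} (k : K → ZMod 2) : k + k = 0 := by
  funext j
  exact CharTwo.add_self_eq_zero _

/-- Hilbert space of qubits labelled by a finite set `K`; the computational basis
vector `e_a` is indexed by a pattern `a : K → ZMod 2`. -/
abbrev HS (K : Type*) := EuclideanSpace ℂ (K → ZMod 2)

section Single
variable {K : Type*} [Fintype K] [DecidableEq K]

/-- Pauli X operator: `X(p) e_a = e_{a+p}`. -/
def XOp (p : K → ZMod 2) : HS K →ₗ[ℂ] HS K where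
  toFun ψ := WithLp.toLp 2 (fun a => ψ (a + p))
  map_add' _ _ := rfl
  map_smul' _ _ := rfl

/-- Pauli Z operator: `Z(p) e_a = (-1)^{Σ_i p i * a i} e_a`. -/
def ZOp (p : K → ZMod 2) : HS K →ₗ[ℂ] HS K where
  toFun ψ := WithLp.toLp 2 (fun a => sgn (∑ i, p i * a i) * ψ a)
  map_add' ψ φ := by
    ext a
    exact mul_add _ _ _
  map_smul' c ψ := by
    ext a
    simp only [RingHom.id_apply, PiLp.smul_apply, smul_eq_mul]
    ring

end Single

section Pair

variable {I J : Type*} [Fintype I] [DecidableEq I] [Fintype J] [DecidableEq J]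

/-- Hilbert space of the matter qubits (labelled by `I`) tensored with the gauge
qubits (labelled by `J`): the computational basis vector indexed by `(a, b)`
realizes the tensor product `e_a ⊗ f_b`. -/
abbrev HS2 (I J : Type*) := EuclideanSpace ℂ ((I → ZMod 2) × (J → ZMod 2))

/-- `X(p) ⊗ X_g(q)` on `H_m ⊗ H_g`. -/
def XXOp (p : I → ZMod 2) (q : J → ZMod 2) : HS2 I J →ₗ[ℂ] HS2 I J where
  toFun ψ := WithLp.toLp 2 (fun ab => ψ (ab.1 + p, ab.2 + q))
  map_add' _ _ := rfl
  map_smul' _ _ := rfl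

/-- `X(p) ⊗ Z_g(q)` on `H_m ⊗ H_g`. -/
def XZOp (p : I → ZMod 2) (q : J → ZMod 2) : HS2 I J →ₗ[ℂ] HS2 I J where
  toFun ψ := WithLp.toLp 2 (fun ab => sgn (∑ j, q j * ab.2 j) * ψ (ab.1 + p, ab.2))
  map_add' ψ φ := by
    ext ab
    exact mul_add _ _ _
  map_smul' c ψ := by
    ext ab
    simp only [RingHom.id_apply, PiLp.smul_apply, smul_eq_mul]
    ring

/-- `Z(p) ⊗ X_g(q)` on `H_m ⊗ H_g`. -/
def ZXOp (p : I → ZMod 2) (q : J → ZMod 2) : HS2 I J →ₗ[ℂ] HS2 I J where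
  toFun ψ := WithLp.toLp 2 (fun ab => sgn (∑ i, p i * ab.1 i) * ψ (ab.1, ab.2 + q))
  map_add' ψ φ := by
    ext ab
    exact mul_add _ _ _
  map_smul' c ψ := by
    ext ab
    simp only [RingHom.id_apply, PiLp.smul_apply, smul_eq_mul]
    ring

/-- The flux operator `1 ⊗ Z_g(k)` on `H_m ⊗ H_g`. -/
def IZOp (k : J → ZMod 2) : HS2 I J →ₗ[ℂ] HS2 I J := XZOp 0 k

variable (A : J → Finset I)

/-- The boundary map `∂ : (I → ZMod 2) → (J → ZMod 2)`, `(∂p)(j) = Σ_{i ∈ A j} p(i)`. -/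
def bnd (p : I → ZMod 2) : J → ZMod 2 := fun j => ∑ i ∈ A j, p i

/-- The coboundary map `δ : (J → ZMod 2) → (I → ZMod 2)`, `(δk)(i) = Σ_{j : i ∈ A j} k(j)`. -/
def cobnd (k : J → ZMod 2) : I → ZMod 2 :=
  fun i => ∑ j ∈ Finset.univ.filter (fun j => i ∈ A j), k j

/-- The indicator pattern `χ_i` of a matter qubit `i`. -/
def chi (i : I) : I → ZMod 2 := Pi.single i 1

/-- The indicator pattern `κ_j` of a gauge qubit `j`. -/
def kap (j : J) : J → ZMod 2 := Pi.single j 1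

/-- The local gauge constraint `C_i = X(χ_i) ⊗ X_g(∂χ_i)`. -/
def C (i : I) : HS2 I J →ₗ[ℂ] HS2 I J := XXOp (chi i) (bnd A (chi i))

lemma XXOp_mul (p p' : I → ZMod 2) (q q' : J → ZMod 2) :
    (XXOp p q : Module.End ℂ (HS2 I J)) * XXOp p' q' = XXOp (p + p') (q + q') := by
  apply LinearMap.ext
  intro ψ
  ext ab
  show ψ (ab.1 + p + p', ab.2 + q + q') = ψ (ab.1 + (p + p'), ab.2 + (q + q'))
  rw [add_assoc, add_assoc]

lemma C_commute (i i' : I) : Commute (C A i) (C A i') := by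
  show C A i * C A i' = C A i' * C A i
  unfold C
  rw [XXOp_mul, XXOp_mul, add_comm (chi i) (chi i'),
    add_comm (bnd A (chi i)) (bnd A (chi i'))]

/-- The product of gauge constraints `C^s = Π_{i : s i = 1} C_i`. -/
def Cprod (s : I → ZMod 2) : Module.End ℂ (HS2 I J) :=
  (Finset.univ.filter fun i => s i = 1).noncommProd (fun i => C A i)
    (fun i _ j _ _ => C_commute A i j)

lemma Chalf_commute (i i' : I) :
    Commute ((2 : ℂ)⁻¹ • (1 + C A i)) ((2 : ℂ)⁻¹ • (1 + C A i')) := by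
  have h : Commute (1 + C A i) (1 + C A i') :=
    (Commute.one_left _).add_left ((Commute.one_right _).add_right (C_commute A i i'))
  exact (h.smul_left _).smul_right _

/-- The projector `P = Π_{i ∈ I} (1 + C_i)/2` onto the gauge invariant subspace. -/
def Pproj : Module.End ℂ (HS2 I J) :=
  Finset.univ.noncommProd (fun i => (2 : ℂ)⁻¹ • (1 + C A i))
    (fun i _ j _ _ => Chalf_commute A i j)

/-- `ψ ↦ ψ ⊗ f_0`, the inclusion `1_m ⊗ |f_0⟩ : H_m → H_m ⊗ H_g` determined by the
all-zeros gauge basis vector `f_0`. -/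
def incl : HS I →ₗ[ℂ] HS2 I J where
  toFun ψ := WithLp.toLp 2 (fun ab => if ab.2 = 0 then ψ ab.1 else 0)
  map_add' ψ φ := by
    ext ab
    by_cases h : ab.2 = 0 <;> simp [h]
  map_smul' c ψ := by
    ext ab
    by_cases h : ab.2 = 0 <;> simp [h]

/-- The compression `1_m ⊗ ⟨f_0| : H_m ⊗ H_g → H_m`. -/
def res0 : HS2 I J →ₗ[ℂ] HS I where
  toFun ψ := WithLp.toLp 2 (fun a => ψ (a, 0))
  map_add' _ _ := rfl
  map_smul' _ _ := rfl

/-- The state gauging map `G ψ = P (ψ ⊗ f_0)`. -/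
def Gmap : HS I →ₗ[ℂ] HS2 I J := Pproj A ∘ₗ incl

/-- The operator gauging map `𝒢[O] = Σ_{s : I → ZMod 2} C^s (O ⊗ |f_0⟩⟨f_0|) C^s`,
where `O ⊗ |f_0⟩⟨f_0| = incl ∘ O ∘ res0`. -/
def gaugeOp (O : Module.End ℂ (HS I)) : Module.End ℂ (HS2 I J) :=
  ∑ s : I → ZMod 2, Cprod A s * (incl ∘ₗ O ∘ₗ res0) * Cprod A s

/-- The joint fixed subspace `{v | C_i v = v for all i}` of the gauge constraints. -/
def fixedSub : Submodule ℂ (HS2 I J) where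
  carrier := {v | ∀ i, C A i v = v}
  add_mem' := by
    intro x y hx hy i
    rw [map_add, hx i, hy i]
  zero_mem' := by
    intro i
    simp
  smul_mem' := by
    intro c x hx i
    rw [map_smul, hx i]

/-- The symmetric subspace `{ψ | X(s) ψ = ψ for all s with ∂s = 0}` of the matter space. -/
def symmSub : Submodule ℂ (HS I) where
  carrier := {ψ | ∀ s, bnd A s = 0 → XOp s ψ = ψ}
  add_mem' := by
    intro x y hx hy s hs
    rw [map_add, hx s hs, hy s hs]
  zero_mem' := by
    intro s hs
    simp
  smul_mem' := by
    intro c x hx s hs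
    rw [map_smul, hx s hs]

/-- The cluster stabilizer `K_i = X(χ_i) ⊗ Z_g(∂χ_i)`. -/
def Kst (i : I) : Module.End ℂ (HS2 I J) := XZOp (chi i) (bnd A (chi i))

/-- The cluster stabilizer `L_j = Z(δκ_j) ⊗ X_g(κ_j)`. -/
def Lst (j : J) : Module.End ℂ (HS2 I J) := ZXOp (cobnd A (kap j)) (kap j)

/-- The disentangling circuit of controlled-X gates from each matter qubit to its
adjacent gauge qubits: `V (e_a ⊗ f_b) = e_a ⊗ f_{b + ∂a}`. -/
def Vequiv : HS2 I J ≃ₗ[ℂ] HS2 I J where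
  toFun ψ := WithLp.toLp 2 (fun ab => ψ (ab.1, ab.2 + bnd A ab.1))
  invFun ψ := WithLp.toLp 2 (fun ab => ψ (ab.1, ab.2 + bnd A ab.1))
  map_add' _ _ := rfl
  map_smul' _ _ := rfl
  left_inv ψ := by
    ext ab
    show ψ (ab.1, ab.2 + bnd A ab.1 + bnd A ab.1) = ψ ab
    rw [add_assoc, zmodfun_add_self, add_zero]
  right_inv ψ := by
    ext ab
    show ψ (ab.1, ab.2 + bnd A ab.1 + bnd A ab.1) = ψ ab
    rw [add_assoc, zmodfun_add_self, add_zero]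

/-- The circuit of controlled-Z gates along the edges of the bipartite graph:
`U (e_a ⊗ f_b) = (-1)^{Σ_j (∂a)(j)·b(j)} e_a ⊗ f_b`. -/
def Uequiv : HS2 I J ≃ₗ[ℂ] HS2 I J where
  toFun ψ := WithLp.toLp 2 (fun ab => sgn (∑ j, bnd A ab.1 j * ab.2 j) * ψ ab)
  invFun ψ := WithLp.toLp 2 (fun ab => sgn (∑ j, bnd A ab.1 j * ab.2 j) * ψ ab)
  map_add' ψ φ := by
    ext ab
    exact mul_add _ _ _
  map_smul' c ψ := by
    ext ab
    simp only [RingHom.id_apply, PiLp.smul_apply, smul_eq_mul]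
    ring
  left_inv ψ := by
    ext ab
    show sgn _ * (sgn _ * ψ ab) = ψ ab
    rw [← mul_assoc, sgn_mul_self, one_mul]
  right_inv ψ := by
    ext ab
    show sgn _ * (sgn _ * ψ ab) = ψ ab
    rw [← mul_assoc, sgn_mul_self, one_mul]

@[simp] lemma XOp_apply {K : Type*} [Fintype K] [DecidableEq K] (p : K → ZMod 2) (ψ : HS K)
    (a : K → ZMod 2) : XOp p ψ a = ψ (a + p) := rfl

@[simp] lemma XXOp_apply (p : I → ZMod 2) (q : J → ZMod 2) (ψ : HS2 I J)
    (ab : (I → ZMod 2) × (J → ZMod 2)) :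
    XXOp p q ψ ab = ψ (ab.1 + p, ab.2 + q) := rfl

@[simp] lemma incl_apply (ψ : HS I) (ab : (I → ZMod 2) × (J → ZMod 2)) :
    incl ψ ab = if ab.2 = 0 then ψ ab.1 else 0 := rfl

@[simp] lemma res0_apply (ψ : HS2 I J) (a : I → ZMod 2) : res0 ψ a = ψ (a, 0) := rfl

lemma XXOp_zero : (XXOp 0 0 : Module.End ℂ (HS2 I J)) = 1 := by
  ext ψ ab
  simp

lemma inner_XOp_left {K : Type*} [Fintype K] [DecidableEq K] (p : K → ZMod 2) (v w : HS K) :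
    inner ℂ (XOp p v) w = inner ℂ v (XOp p w) := by
  simp only [PiLp.inner_apply, XOp_apply]
  refine (Fintype.sum_equiv (Equiv.addRight p) _ _ fun a => ?_).symm
  simp [add_assoc, zmodfun_add_self]

lemma inner_XXOp_left (p : I → ZMod 2) (q : J → ZMod 2) (v w : HS2 I J) :
    inner ℂ (XXOp p q v) w = inner ℂ v (XXOp p q w) := by
  simp only [PiLp.inner_apply, XXOp_apply]
  refine (Fintype.sum_equiv (Equiv.addRight (p, q)) _ _ fun ab => ?_).symm
  simp only [Equiv.coe_addRight, Prod.fst_add, Prod.snd_add, add_assoc, zmodfun_add_self,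
    add_zero]
  rfl

lemma inner_incl_right (v : HS2 I J) (φ : HS I) :
    inner ℂ v (incl φ) = inner ℂ (res0 v) φ := by
  simp only [PiLp.inner_apply, Fintype.sum_prod_type, incl_apply, res0_apply]
  refine Finset.sum_congr rfl fun a _ => ?_
  rw [Finset.sum_eq_single 0 (fun b _ hb => by simp [hb]) (by simp)]
  simp

lemma res0_XXOp_incl (p : I → ZMod 2) (q : J → ZMod 2) (φ : HS I) :
    res0 (XXOp p q (incl φ)) = if q = 0 then XOp p φ else 0 := by
  split_ifs with hq <;> ext a <;> simp [hq]

lemma bnd_zero : bnd A 0 = 0 := by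
  funext j
  simp [bnd]

lemma bnd_add (p q : I → ZMod 2) : bnd A (p + q) = bnd A p + bnd A q := by
  funext j
  simp [bnd, Finset.sum_add_distrib]

lemma sum_chi_apply (T : Finset I) (i : I) :
    (∑ k ∈ T, chi k) i = if i ∈ T then 1 else 0 := by
  simp [chi, Finset.sum_apply, Pi.single_apply]

lemma sum_chi_filter_eq_one (s : I → ZMod 2) :
    ∑ i ∈ Finset.univ.filter (s · = 1), chi i = s := by
  funext i
  rw [sum_chi_apply]
  rcases (by decide : ∀ x : ZMod 2, x = 0 ∨ x = 1) (s i) with h | h <;> simp [h]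

lemma sum_chi_bijective : Function.Bijective fun T : Finset I => ∑ i ∈ T, chi i := by
  refine Function.bijective_iff_has_inverse.mpr
    ⟨fun s => Finset.univ.filter (s · = 1), fun T => ?_, sum_chi_filter_eq_one⟩
  ext i
  simp only [Finset.mem_filter, Finset.mem_univ, true_and, sum_chi_apply]
  by_cases h : i ∈ T <;> simp [h]

lemma noncommProd_C (T : Finset I)
    (hT : (T : Set I).Pairwise
      (Function.onFun Commute fun i => (C A i : Module.End ℂ (HS2 I J)))) :
    T.noncommProd (fun i => C A i) hT = XXOp (∑ i ∈ T, chi i) (bnd A (∑ i ∈ T, chi i)) := by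
  induction T using Finset.induction_on with
  | empty => rw [Finset.noncommProd_empty, Finset.sum_empty, bnd_zero, XXOp_zero]
  | insert a T ha ih =>
    rw [Finset.noncommProd_insert_of_notMem _ _ _ _ ha, ih, C, XXOp_mul, ← bnd_add,
      Finset.sum_insert ha]

lemma Cprod_eq (s : I → ZMod 2) : Cprod A s = XXOp s (bnd A s) := by
  rw [Cprod, noncommProd_C A _ (fun i _ j _ _ => C_commute A i j), sum_chi_filter_eq_one]

lemma noncommProd_half_one_add_C (F : Finset I)
    (hF : (F : Set I).Pairwise
      (Function.onFun Commute fun i => (2 : ℂ)⁻¹ • (1 + (C A i : Module.End ℂ (HS2 I J))))) :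
    F.noncommProd (fun i => (2 : ℂ)⁻¹ • (1 + C A i)) hF
      = (2 : ℂ)⁻¹ ^ F.card •
          ∑ T ∈ F.powerset, XXOp (∑ i ∈ T, chi i) (bnd A (∑ i ∈ T, chi i)) := by
  induction F using Finset.induction_on with
  | empty =>
    rw [Finset.noncommProd_empty, Finset.powerset_empty, Finset.sum_singleton, Finset.sum_empty,
      bnd_zero, XXOp_zero, Finset.card_empty, pow_zero, one_smul]
  | insert a F ha ih =>
    rw [Finset.noncommProd_insert_of_notMem _ _ _ _ ha, ih, smul_mul_smul_comm,
      Finset.card_insert_of_notMem ha, pow_succ', Finset.sum_powerset_insert ha, add_mul,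
      one_mul, Finset.mul_sum]
    congr 2
    refine Finset.sum_congr rfl fun T hT => ?_
    have haT : a ∉ T := fun h => ha (Finset.mem_powerset.mp hT h)
    rw [C, XXOp_mul, ← bnd_add, Finset.sum_insert haT]

lemma Pproj_eq :
    Pproj A = (2 : ℂ)⁻¹ ^ Fintype.card I • ∑ s : I → ZMod 2, XXOp s (bnd A s) := by
  rw [Pproj, noncommProd_half_one_add_C A _ (fun i _ j _ _ => Chalf_commute A i j),
    Finset.card_univ, Finset.powerset_univ]
  congr 1
  exact Fintype.sum_bijective _ sum_chi_bijective _ _ fun T => rfl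

def symmetries : Finset (I → ZMod 2) := Finset.univ.filter fun s => bnd A s = 0

@[simp] lemma mem_symmetries {s : I → ZMod 2} : s ∈ symmetries A ↔ bnd A s = 0 := by
  simp [symmetries]

lemma natCard_symmetries :
    Nat.card {s : I → ZMod 2 // bnd A s = 0} = (symmetries A).card := by
  rw [Nat.card_eq_fintype_card, Fintype.card_subtype, symmetries]

lemma Cprod_mul_Pproj (s : I → ZMod 2) : Cprod A s * Pproj A = Pproj A := by
  rw [Cprod_eq, Pproj_eq, mul_smul_comm, Finset.mul_sum]
  congr 1
  simp_rw [XXOp_mul, ← bnd_add]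
  exact Fintype.sum_equiv (Equiv.addLeft s) _ _ fun _ => rfl

lemma Cprod_Gmap (s : I → ZMod 2) (ψ : HS I) : Cprod A s (Gmap A ψ) = Gmap A ψ :=
  LinearMap.congr_fun (Cprod_mul_Pproj A s) (incl ψ)

lemma inner_Gmap_Cprod (s : I → ZMod 2) (ψ : HS I) (v : HS2 I J) :
    inner ℂ (Gmap A ψ) (Cprod A s v) = inner ℂ (Gmap A ψ) v := by
  rw [Cprod_eq, ← inner_XXOp_left, ← Cprod_eq, Cprod_Gmap]

lemma inner_Gmap_gaugeOp (O : Module.End ℂ (HS I)) (ψ₀ ψ₁ : HS I) :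
    inner ℂ (Gmap A ψ₀) (gaugeOp A O (Gmap A ψ₁))
      = 2 ^ Fintype.card I * inner ℂ (res0 (Gmap A ψ₀)) (O (res0 (Gmap A ψ₁))) := by
  have hterm : ∀ s, inner ℂ (Gmap A ψ₀)
      ((Cprod A s * (incl ∘ₗ O ∘ₗ res0) * Cprod A s : Module.End ℂ (HS2 I J)) (Gmap A ψ₁))
      = inner ℂ (res0 (Gmap A ψ₀)) (O (res0 (Gmap A ψ₁))) := fun s => by
    simp only [Module.End.mul_apply, LinearMap.comp_apply]
    rw [Cprod_Gmap, inner_Gmap_Cprod, inner_incl_right]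
  simp only [gaugeOp, LinearMap.sum_apply, inner_sum, hterm, Finset.sum_const,
    Finset.card_univ, Fintype.card_fun, ZMod.card, nsmul_eq_mul, Nat.cast_pow, Nat.cast_ofNat]

lemma res0_Gmap (φ : HS I) :
    res0 (Gmap A φ) = (2 : ℂ)⁻¹ ^ Fintype.card I • ∑ u ∈ symmetries A, XOp u φ := by
  change res0 (Pproj A (incl φ)) = _
  simp only [Pproj_eq, LinearMap.smul_apply, LinearMap.sum_apply, map_smul, map_sum,
    res0_XXOp_incl, symmetries, Finset.sum_filter]

lemma sum_XOp_of_symm {ψ : HS I} (hψ : ∀ s : I → ZMod 2, bnd A s = 0 → XOp s ψ = ψ) :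
    ∑ u ∈ symmetries A, XOp u ψ = ((symmetries A).card : ℂ) • ψ := by
  rw [Finset.sum_congr rfl fun u hu => hψ u ((mem_symmetries A).mp hu), Finset.sum_const,
    Nat.cast_smul_eq_nsmul]

lemma inner_O_sum_XOp_of_symm {O : Module.End ℂ (HS I)}
    (hO : ∀ s : I → ZMod 2, bnd A s = 0 → O * XOp s = XOp s * O)
    {ψ₀ : HS I} (hψ₀ : ∀ s : I → ZMod 2, bnd A s = 0 → XOp s ψ₀ = ψ₀) (ψ₁ : HS I) :
    inner ℂ ψ₀ (O (∑ u ∈ symmetries A, XOp u ψ₁))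
      = (symmetries A).card * inner ℂ ψ₀ (O ψ₁) := by
  have hterm : ∀ u ∈ symmetries A, inner ℂ ψ₀ (O (XOp u ψ₁)) = inner ℂ ψ₀ (O ψ₁) := by
    intro u hu
    rw [mem_symmetries] at hu
    rw [← Module.End.mul_apply, hO u hu, Module.End.mul_apply, ← inner_XOp_left, hψ₀ u hu]
  rw [map_sum, inner_sum, Finset.sum_congr rfl hterm, Finset.sum_const, nsmul_eq_mul]

/-- Symmetric matrix elements are preserved by gauging:
`⟨G ψ₀, 𝒢[O] (G ψ₁)⟩ = (|S|² / 2^{|I|}) · ⟨ψ₀, O ψ₁⟩` for `ψ₀` symmetric. -/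
theorem gauging_preserves_matrix_elements (A : J → Finset I) (O : Module.End ℂ (HS I))
    (hO : ∀ s : I → ZMod 2, bnd A s = 0 → O * XOp s = XOp s * O)
    (ψ₀ ψ₁ : HS I) (hψ₀ : ∀ s : I → ZMod 2, bnd A s = 0 → XOp s ψ₀ = ψ₀) :
    inner (𝕜 := ℂ) (Gmap A ψ₀) (gaugeOp A O (Gmap A ψ₁))
      = ((Nat.card {s : I → ZMod 2 // bnd A s = 0} : ℂ) ^ 2 / 2 ^ Fintype.card I) *
          inner (𝕜 := ℂ) ψ₀ (O ψ₁) := by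
  rw [inner_Gmap_gaugeOp, res0_Gmap, res0_Gmap, sum_XOp_of_symm A hψ₀, map_smul,
    inner_smul_left, inner_smul_right, inner_smul_left, inner_O_sum_XOp_of_symm A hO hψ₀,
    natCard_symmetries]
  simp only [map_pow, map_inv₀, map_ofNat, map_natCast, inv_pow]
  field_simp

end Pair

end GaugingFractal
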